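/- Let a bounded and monotonic routing metric be assigned over a finite connected system S. Then for any vertices p and v and any walk (not necessarily simple) from p to v in S, the metric of that walk computed from p is ⪯ μ(v,p); that is, the maximum over simple paths also bounds the value of every walk. -/
import Mathlib


def MetBounded {M W : Type} [LinearOrder M] (met : M → W → M) : Prop :=
  ∀ m w, met m w ≤ m

def MetMonotonic {M W : Type} [LinearOrder M] (met : M → W → M) : Prop :=
  ∀ m m' w, m ≤ m' → met m w ≤ met m' w

def MetStrictlyDecreasing {M W : Type} [LinearOrder M] (met : M → W → M) : Prop :=
  ∀ m : M, (∀ w, met m w < m) ∨ (∀ w, met m w = m)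

def IsMetFixedPoint {M W : Type} (met : M → W → M) (m : M) : Prop :=
  ∀ w, met m w = m

/-- The metric value of a walk, computed from its start with initial value `m`. -/
def walkVal {M W V : Type} (met : M → W → M) (wf : V → V → W) {G : SimpleGraph V} :
    {u v : V} → G.Walk u v → M → M
  | _, _, SimpleGraph.Walk.nil, m => m
  | u, _, SimpleGraph.Walk.cons (v := x) _ q, m => walkVal met wf q (met m (wf u x))

/-- `mu v p` is the maximum, over simple paths from `p` to `v`, of the path metric. -/
def IsMaxMetric {M W V : Type} [LinearOrder M] (met : M → W → M) (wf : V → V → W)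
    (G : SimpleGraph V) (mr : M) (mu : V → V → M) : Prop :=
  ∀ v p : V,
    (∃ q : G.Walk p v, q.IsPath ∧ walkVal met wf q mr = mu v p) ∧
    (∀ q : G.Walk p v, q.IsPath → walkVal met wf q mr ≤ mu v p)

section Aux

variable {M W V : Type} [LinearOrder M] (met : M → W → M) (wf : V → V → W)
  {G : SimpleGraph V}

lemma walkVal_mono (hmono : MetMonotonic met) :
    ∀ {u v : V} (q : G.Walk u v) {m m' : M}, m ≤ m' →
      walkVal met wf q m ≤ walkVal met wf q m'
  | _, _, SimpleGraph.Walk.nil, _, _, h => h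
  | u, _, SimpleGraph.Walk.cons (v := x) _ q, m, m', h =>
    walkVal_mono hmono q (hmono _ _ _ h)

lemma walkVal_le (hbound : MetBounded met) (hmono : MetMonotonic met) :
    ∀ {u v : V} (q : G.Walk u v) (m : M), walkVal met wf q m ≤ m
  | _, _, SimpleGraph.Walk.nil, _ => le_refl _
  | u, _, SimpleGraph.Walk.cons (v := x) _ q, m =>
    le_trans (le_trans (walkVal_le hbound hmono q _)
      (le_refl _)) (le_trans (le_refl _) (hbound m (wf u x))) |>.trans (le_refl _)

lemma walkVal_append :
    ∀ {u v w : V} (p : G.Walk u v) (q : G.Walk v w) (m : M),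
      walkVal met wf (p.append q) m = walkVal met wf q (walkVal met wf p m)
  | _, _, _, SimpleGraph.Walk.nil, q, m => rfl
  | u, _, _, SimpleGraph.Walk.cons _ p, q, m => walkVal_append p q _

lemma walkVal_bypass [DecidableEq V] (hbound : MetBounded met) (hmono : MetMonotonic met) :
    ∀ {u v : V} (q : G.Walk u v) (m : M),
      walkVal met wf q m ≤ walkVal met wf q.bypass m
  | _, _, SimpleGraph.Walk.nil, m => le_refl _
  | u, _, SimpleGraph.Walk.cons (v := x) ha q, m => by
    rw [SimpleGraph.Walk.bypass]
    split_ifs with hs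
    · have h1 : walkVal met wf q (met m (wf u x)) ≤
          walkVal met wf q.bypass m := by
        refine le_trans (walkVal_bypass hbound hmono q _) ?_
        exact walkVal_mono met wf hmono _ (hbound m (wf u x))
      refine le_trans h1 ?_
      conv_lhs => rw [← (q.bypass.take_spec hs)]
      rw [walkVal_append]
      exact walkVal_mono met wf hmono _
        (walkVal_le met wf hbound hmono _ m)
    · exact walkVal_bypass hbound hmono q _

end Aux

/-- For a bounded monotonic metric assigned over a finite connected
system, the metric of every walk (not necessarily simple) from `p` to `v`,
computed from `p`, is `⪯ μ(v,p)`. -/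
theorem statement_3 {M W V : Type} [LinearOrder M] [Fintype V]
    (met : M → W → M) (mr : M) (hmr : ∀ m : M, m ≤ mr)
    (hbound : MetBounded met) (hmono : MetMonotonic met)
    (G : SimpleGraph V) (hconn : G.Connected)
    (wf : V → V → W) (hwf : ∀ u v : V, wf u v = wf v u)
    (mu : V → V → M) (hmu : IsMaxMetric met wf G mr mu) :
    ∀ (p v : V) (q : G.Walk p v), walkVal met wf q mr ≤ mu v p := by
  classical
  intro p v q
  refine le_trans (walkVal_bypass met wf hbound hmono q mr) ?_
  exact (hmu v p).2 q.bypass q.bypass_isPath
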